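/- arXiv:0805.0501 — 3 statements merged into one kernel-verified Lean document; each statement's English description precedes it below -/
import Mathlib

section
/- Let d be a positive even integer. Then the smallest positive integer z such that ⌊z·(d+1)/(2z+1) − 1⌋ = d/2 − 1 is z = d/2. -/
/-! With `d = 2m`, the threshold `z(2m+1)/(2z+1) - 1` equals `m - 1` at `z = m`, and for
`z ≥ 0` the comparison `z(2m+1)/(2z+1) < m` is equivalent to `z < m`, since after clearing
the denominator both sides share the term `2zm`. So the floor reaches `m - 1` exactly from
`z = m` on. -/

lemma mul_two_mul_add_one_div_lt_iff {z m : ℝ} (hz : 0 ≤ z) :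
    z * (2 * m + 1) / (2 * z + 1) < m ↔ z < m := by
  rw [div_lt_iff₀ (by positivity)]
  constructor <;> intro h <;> linarith

lemma le_floor_mul_two_mul_add_one_div_iff (z m : ℕ) :
    (m : ℤ) ≤ ⌊(z : ℝ) * (2 * m + 1) / (2 * z + 1)⌋ ↔ m ≤ z := by
  rw [Int.le_floor, Int.cast_natCast, ← not_lt, mul_two_mul_add_one_div_lt_iff (Nat.cast_nonneg z),
    Nat.cast_lt, not_lt]

lemma floor_mul_two_mul_add_one_div_self (m : ℕ) :
    ⌊(m : ℝ) * (2 * m + 1) / (2 * m + 1)⌋ = m := by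
  rw [mul_div_cancel_right₀ _ (by positivity), Int.floor_natCast]

theorem stmt_3 (d : ℕ) (hd : 0 < d) (hde : Even d) :
    IsLeast {z : ℕ | 0 < z ∧
      ⌊(z : ℝ) * ((d : ℝ) + 1) / (2 * (z : ℝ) + 1) - 1⌋ = (d : ℤ) / 2 - 1} (d / 2) := by
  obtain ⟨m, rfl⟩ := hde
  have hm : (m + m) / 2 = m := by omega
  have hmℤ : ((m + m : ℕ) : ℤ) / 2 = m := by omega
  have hmℝ : ((m + m : ℕ) : ℝ) + 1 = 2 * m + 1 := by push_cast; ring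
  simp only [hm, hmℤ, hmℝ, Int.floor_sub_one, sub_left_inj]
  refine ⟨⟨by omega, floor_mul_two_mul_add_one_div_self m⟩, fun z ⟨_, hfloor⟩ => ?_⟩
  exact (le_floor_mul_two_mul_add_one_div_iff z m).1 hfloor.ge
end

section
/- Let d be a positive integer, ℓ ≥ 2 an integer, λ = (ℓ+1)/ℓ, and z a positive integer with λ(λ−1)^z < 2. Define b := (d − 1 + λ(λ−1)^z)/(2 − λ(λ−1)^z), a := (d+1)/(2 − λ(λ−1)^z), and T_k := b − a(λ−1)^k for k = 1,…,z. Then T_1 < T_2 < … < T_z and T_z < (d−1)/2. -/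
/-! Since `0 < λ - 1 < 1`, the thresholds `b - a (λ - 1)^k` increase with `k`. After clearing the
positive denominator `2 - λ(λ - 1)^z`, the bound `T_z < (d - 1)/2` becomes
`(d + 1) λ (λ - 1)^z < 2 (d + 1) (λ - 1)^z`, that is, `λ < 2`. -/

lemma strictMono_sub_mul_pow (b : ℝ) {a r : ℝ} (ha : 0 < a) (hr₀ : 0 < r) (hr₁ : r < 1) :
    StrictMono fun k : ℕ => b - a * r ^ k := fun _ _ hk => by
  have := pow_lt_pow_right_of_lt_one₀ hr₀ hr₁ hk
  dsimp only
  nlinarith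

lemma div_sub_div_mul_lt_half {x c q : ℝ} (hx : -1 < x) (hc : c < 2) (hcq : c < 2 * q) :
    (x - 1 + c) / (2 - c) - (x + 1) / (2 - c) * q < (x - 1) / 2 := by
  have hD : 0 < 2 - c := by linarith
  rw [div_mul_eq_mul_div, div_sub_div_same, div_lt_div_iff₀ hD two_pos]
  nlinarith

lemma succ_div_self_sub_one_mem_Ioo {ℓ : ℕ} (hℓ : 2 ≤ ℓ) :
    ((ℓ : ℝ) + 1) / ℓ - 1 ∈ Set.Ioo 0 1 := by
  have hℓ' : (2 : ℝ) ≤ ℓ := by exact_mod_cast hℓ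
  have hsub : ((ℓ : ℝ) + 1) / ℓ - 1 = (ℓ : ℝ)⁻¹ := by field_simp; ring
  rw [hsub]
  exact ⟨by positivity, inv_lt_one_of_one_lt₀ (by linarith)⟩

theorem stmt_8_general (d ℓ z : ℕ) (hℓ : 2 ≤ ℓ)
    (lam : ℝ) (hlam : lam = ((ℓ : ℝ) + 1) / (ℓ : ℝ))
    (hsmall : lam * (lam - 1) ^ z < 2)
    (b a : ℝ)
    (hb : b = ((d : ℝ) - 1 + lam * (lam - 1) ^ z) / (2 - lam * (lam - 1) ^ z))
    (ha : a = ((d : ℝ) + 1) / (2 - lam * (lam - 1) ^ z))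
    (T : ℕ → ℝ) (hT : ∀ k, T k = b - a * (lam - 1) ^ k) :
    (∀ k₁ k₂ : ℕ, 1 ≤ k₁ → k₁ < k₂ → k₂ ≤ z → T k₁ < T k₂) ∧
    T z < ((d : ℝ) - 1) / 2 := by
  obtain ⟨hr₀, hr₁⟩ := succ_div_self_sub_one_mem_Ioo hℓ
  rw [← hlam] at hr₀ hr₁
  have hd : (-1 : ℝ) < d := by linarith [d.cast_nonneg (α := ℝ)]
  have ha₀ : 0 < a := by rw [ha]; exact div_pos (by linarith) (by linarith)
  have hT' : T = fun k => b - a * (lam - 1) ^ k := funext hT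
  refine ⟨fun k₁ k₂ _ hk _ => hT' ▸ strictMono_sub_mul_pow b ha₀ hr₀ hr₁ hk, ?_⟩
  rw [hT, hb, ha]
  refine div_sub_div_mul_lt_half hd hsmall ?_
  exact mul_lt_mul_of_pos_right (by linarith) (pow_pos hr₀ z)

theorem stmt_8 (d ℓ z : ℕ) (hd : 0 < d) (hℓ : 2 ≤ ℓ) (hz : 0 < z)
    (lam : ℝ) (hlam : lam = ((ℓ : ℝ) + 1) / (ℓ : ℝ))
    (hsmall : lam * (lam - 1) ^ z < 2)
    (b a : ℝ)
    (hb : b = ((d : ℝ) - 1 + lam * (lam - 1) ^ z) / (2 - lam * (lam - 1) ^ z))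
    (ha : a = ((d : ℝ) + 1) / (2 - lam * (lam - 1) ^ z))
    (T : ℕ → ℝ) (hT : ∀ k, T k = b - a * (lam - 1) ^ k) :
    (∀ k₁ k₂ : ℕ, 1 ≤ k₁ → k₁ < k₂ → k₂ ≤ z → T k₁ < T k₂) ∧
    T z < ((d : ℝ) - 1) / 2 :=
  stmt_8_general d ℓ z hℓ lam hlam hsmall b a hb ha T hT
end

section
/- Let d be a positive integer, ℓ ≥ 2, λ = (ℓ+1)/ℓ, and for positive integer z define T_z^{(z)} := b − a(λ−1)^z with b = (d−1+λ(λ−1)^z)/(2−λ(λ−1)^z) and a = (d+1)/(2−λ(λ−1)^z). Then T_z^{(z)} is nondecreasing in z and T_z^{(z)} → (d−1)/2 as z → ∞. -/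
/-!
With `x = (λ - 1) ^ z = ℓ ^ (-z)`, `T` is the fractional-linear function
`x ↦ (d - 1 + (λ - d - 1) x) / (2 - λ x)`, whose determinant-like coefficient
`2 (λ - d - 1) + λ (d - 1) = (λ - 2) (d + 1)` is nonpositive, so `T` decreases in `x` on `[0, 1]`;
as `x → 0` it tends to `(d - 1) / 2`.
-/

open Filter Topology

-- Cross-multiplied, the difference of the values at `x` and `y` is `(b c + k a) (x - y)`.
theorem antitoneOn_add_mul_div_sub_mul {a b c k : ℝ} (h : b * c + k * a ≤ 0) :
    AntitoneOn (fun x => (a + b * x) / (c - k * x)) {x | k * x < c} := by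
  intro y hy x hx hyx
  simp only [Set.mem_ofPred_eq] at hx hy
  rw [div_le_div_iff₀ (sub_pos.2 hx) (sub_pos.2 hy)]
  nlinarith [mul_nonneg (sub_nonneg.2 hyx) (neg_nonneg.2 h)]

theorem tendsto_add_mul_pow_div_sub_mul_pow {a b c k r : ℝ} (hr : |r| < 1) (hc : c ≠ 0) :
    Tendsto (fun n : ℕ => (a + b * r ^ n) / (c - k * r ^ n)) atTop (𝓝 (a / c)) := by
  have h := tendsto_pow_atTop_nhds_zero_of_abs_lt_one hr
  simpa only [mul_zero, add_zero, sub_zero, Pi.div_def] using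
    ((h.const_mul b).const_add a).div ((h.const_mul k).const_sub c) (by simpa using hc)

theorem stmt_9_general (d ℓ : ℕ) (hℓ : 2 ≤ ℓ)
    (lam : ℝ) (hlam : lam = ((ℓ : ℝ) + 1) / (ℓ : ℝ))
    (T : ℕ → ℝ)
    (hT : ∀ z, T z = ((d : ℝ) - 1 + lam * (lam - 1) ^ z) / (2 - lam * (lam - 1) ^ z) -
        (((d : ℝ) + 1) / (2 - lam * (lam - 1) ^ z)) * (lam - 1) ^ z) :
    (∀ z₁ z₂ : ℕ, 0 < z₁ → z₁ ≤ z₂ → T z₁ ≤ T z₂) ∧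
    Filter.Tendsto T Filter.atTop (nhds (((d : ℝ) - 1) / 2)) := by
  have hℓ1 : (1 : ℝ) < ℓ := by exact_mod_cast hℓ
  have hr : lam - 1 = (ℓ : ℝ)⁻¹ := by
    rw [hlam]; field_simp; ring
  have hr0 : 0 < lam - 1 := hr ▸ inv_pos.2 (by linarith)
  have hr1 : lam - 1 < 1 := hr ▸ inv_lt_one_of_one_lt₀ hℓ1
  have hden : ∀ z : ℕ, lam * (lam - 1) ^ z < 2 := fun z =>
    calc lam * (lam - 1) ^ z ≤ lam * 1 :=
          mul_le_mul_of_nonneg_left (pow_le_one₀ hr0.le hr1.le) (by linarith)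
      _ < 2 := by linarith
  obtain rfl : T = fun z => ((d : ℝ) - 1 + (lam - (d + 1)) * (lam - 1) ^ z) /
      (2 - lam * (lam - 1) ^ z) := funext fun z => by rw [hT]; ring
  refine ⟨fun z₁ z₂ _ hz => ?_, ?_⟩
  · exact antitoneOn_add_mul_div_sub_mul (by nlinarith) (hden z₂) (hden z₁)
      (pow_le_pow_of_le_one hr0.le hr1.le hz)
  · exact tendsto_add_mul_pow_div_sub_mul_pow (abs_lt.2 ⟨by linarith, hr1⟩) two_ne_zero

theorem stmt_9 (d ℓ : ℕ) (hd : 0 < d) (hℓ : 2 ≤ ℓ)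
    (lam : ℝ) (hlam : lam = ((ℓ : ℝ) + 1) / (ℓ : ℝ))
    (T : ℕ → ℝ)
    (hT : ∀ z, T z = ((d : ℝ) - 1 + lam * (lam - 1) ^ z) / (2 - lam * (lam - 1) ^ z) -
        (((d : ℝ) + 1) / (2 - lam * (lam - 1) ^ z)) * (lam - 1) ^ z) :
    (∀ z₁ z₂ : ℕ, 0 < z₁ → z₁ ≤ z₂ → T z₁ ≤ T z₂) ∧
    Filter.Tendsto T Filter.atTop (nhds (((d : ℝ) - 1) / 2)) :=
  stmt_9_general d ℓ hℓ lam hlam T hT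
end
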